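/- Let Z = U S where U is an n×n unitary matrix and S has independent mean-zero components with Cum[S_i,S_j,S_k,S_l] = kurt_i δ_{ijkl}. Then for any n×n matrix M = (m_{lk}), the matrix Q with entries q_{ij} = Σ_{k,l} Cum(Z_i, Z_j*, Z_k, Z_l*) m_{lk} equals Σ_{p=1}^n (kurt_p · u_p' M u_p) u_p u_p', where u_p is the p-th column of U; in particular Q = U D U' with D diagonal. -/

import Mathlib

open MeasureTheory

/-- Fourth-order cumulant of complex random variables. -/
noncomputable def ccum4 {Ω : Type*} [MeasurableSpace Ω] (μ : Measure Ω)
    (a b c d : Ω → ℂ) : ℂ :=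
  (∫ ω, a ω * b ω * c ω * d ω ∂μ)
    - (∫ ω, a ω * b ω ∂μ) * (∫ ω, c ω * d ω ∂μ)
    - (∫ ω, a ω * c ω ∂μ) * (∫ ω, b ω * d ω ∂μ)
    - (∫ ω, a ω * d ω ∂μ) * (∫ ω, b ω * c ω ∂μ)

/-!
By Hölder, all products of at most four `L⁴` variables are integrable, so `ccum4` is linear in
its first argument; it is also invariant under cyclic rotation of its arguments, hence
multilinear. Expanding `Z = U S` therefore turns `Cum(Z_i, Z_j*, Z_k, Z_l*)` into a fourfold sum
of cumulants of the sources, of which only the diagonal terms survive: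
`∑_p u_ip ū_jp u_kp ū_lp kurt_p`. Contracting with `m_lk` produces `kurt_p · u_p' M u_p`.
-/

open scoped ENNReal ComplexConjugate

instance ENNReal.holderTriple_four_four_two : ENNReal.HolderTriple 4 4 2 :=
  ⟨by
    rw [← two_mul, show (4 : ℝ≥0∞) = 2 * 2 by norm_num, ENNReal.mul_inv (by simp) (by simp),
      ← mul_assoc, ENNReal.mul_inv_cancel (by norm_num) (by norm_num), one_mul]⟩

section Cumulant

variable {Ω : Type*} [MeasurableSpace Ω] {μ : Measure Ω}

theorem MeasureTheory.MemLp.integrable_mul_of_four [IsFiniteMeasure μ] {f g : Ω → ℂ}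
    (hf : MemLp f 4 μ) (hg : MemLp g 4 μ) : Integrable (fun ω => f ω * g ω) μ :=
  (hf.mono_exponent (by norm_num : (2 : ℝ≥0∞) ≤ 4)).integrable_mul
    (hg.mono_exponent (by norm_num : (2 : ℝ≥0∞) ≤ 4))

theorem MeasureTheory.MemLp.integrable_mul_mul_mul {f g h k : Ω → ℂ} (hf : MemLp f 4 μ)
    (hg : MemLp g 4 μ) (hh : MemLp h 4 μ) (hk : MemLp k 4 μ) :
    Integrable (fun ω => f ω * g ω * h ω * k ω) μ :=
  ((hg.mul hf (r := 2)).integrable_mul (hk.mul hh (r := 2))).congr <| .of_forall fun ω => by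
    simp only [Pi.mul_apply]; ring

theorem integral_sum_mul {ι : Type*} (s : Finset ι) (c : ι → ℂ) {F : ι → Ω → ℂ} {g : Ω → ℂ}
    (hF : ∀ p ∈ s, Integrable (fun ω => F p ω * g ω) μ) :
    ∫ ω, (∑ p ∈ s, c p * F p ω) * g ω ∂μ = ∑ p ∈ s, c p * ∫ ω, F p ω * g ω ∂μ := by
  simp_rw [Finset.sum_mul, mul_assoc]
  rw [integral_finsetSum s fun p hp => (hF p hp).const_mul (c p)]
  simp_rw [integral_const_mul]

theorem ccum4_rotate (a b c d : Ω → ℂ) : ccum4 μ a b c d = ccum4 μ b c d a := by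
  -- the rotation permutes the three pairings `ab|cd`, `ac|bd`, `ad|bc` among themselves
  have swap : ∀ f g : Ω → ℂ, ∫ ω, f ω * g ω ∂μ = ∫ ω, g ω * f ω ∂μ := fun f g => by
    simp only [mul_comm]
  have cycle : ∫ ω, b ω * c ω * d ω * a ω ∂μ = ∫ ω, a ω * b ω * c ω * d ω ∂μ := by
    congr 1 with ω; ring
  rw [ccum4, ccum4, cycle, swap d a, swap c a, swap b a]
  ring

theorem ccum4_sum_left [IsFiniteMeasure μ] {ι : Type*} (s : Finset ι) (c : ι → ℂ)
    {F : ι → Ω → ℂ} {b d e : Ω → ℂ} (hF : ∀ p ∈ s, MemLp (F p) 4 μ) (hb : MemLp b 4 μ)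
    (hd : MemLp d 4 μ) (he : MemLp e 4 μ) :
    ccum4 μ (fun ω => ∑ p ∈ s, c p * F p ω) b d e = ∑ p ∈ s, c p * ccum4 μ (F p) b d e := by
  have h4 : ∀ p ∈ s, Integrable (fun ω => F p ω * (b ω * (d ω * e ω))) μ := fun p hp =>
    ((hF p hp).integrable_mul_mul_mul hb hd he).congr <| .of_forall fun ω => by ring
  simp only [ccum4, mul_assoc]
  rw [integral_sum_mul s c h4]
  rw [integral_sum_mul s c fun p hp => (hF p hp).integrable_mul_of_four hb,
    integral_sum_mul s c fun p hp => (hF p hp).integrable_mul_of_four hd,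
    integral_sum_mul s c fun p hp => (hF p hp).integrable_mul_of_four he]
  simp only [Finset.sum_mul, ← Finset.sum_sub_distrib, mul_sub, mul_assoc]

theorem ccum4_sum_sum_sum_sum [IsFiniteMeasure μ] {ι : Type*} (s : Finset ι)
    (c₁ c₂ c₃ c₄ : ι → ℂ) {F₁ F₂ F₃ F₄ : ι → Ω → ℂ} (h₁ : ∀ p, MemLp (F₁ p) 4 μ)
    (h₂ : ∀ p, MemLp (F₂ p) 4 μ) (h₃ : ∀ p, MemLp (F₃ p) 4 μ) (h₄ : ∀ p, MemLp (F₄ p) 4 μ) :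
    ccum4 μ (fun ω => ∑ p ∈ s, c₁ p * F₁ p ω) (fun ω => ∑ q ∈ s, c₂ q * F₂ q ω)
        (fun ω => ∑ r ∈ s, c₃ r * F₃ r ω) (fun ω => ∑ t ∈ s, c₄ t * F₄ t ω)
      = ∑ p ∈ s, ∑ q ∈ s, ∑ r ∈ s, ∑ t ∈ s,
          c₁ p * c₂ q * c₃ r * c₄ t * ccum4 μ (F₁ p) (F₂ q) (F₃ r) (F₄ t) := by
  have hsum : ∀ (c : ι → ℂ) {F : ι → Ω → ℂ}, (∀ p, MemLp (F p) 4 μ) →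
      MemLp (fun ω => ∑ p ∈ s, c p * F p ω) 4 μ := fun c F hF =>
    memLp_finsetSum s fun p _ => (hF p).const_mul (c p)
  rw [ccum4_sum_left s c₁ (fun p _ => h₁ p) (hsum c₂ h₂) (hsum c₃ h₃) (hsum c₄ h₄)]
  refine Finset.sum_congr rfl fun p _ => ?_
  rw [ccum4_rotate, ccum4_sum_left s c₂ (fun q _ => h₂ q) (hsum c₃ h₃) (hsum c₄ h₄) (h₁ p),
    Finset.mul_sum]
  refine Finset.sum_congr rfl fun q _ => ?_
  rw [ccum4_rotate, ccum4_sum_left s c₃ (fun r _ => h₃ r) (hsum c₄ h₄) (h₁ p) (h₂ q),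
    Finset.mul_sum, Finset.mul_sum]
  refine Finset.sum_congr rfl fun r _ => ?_
  rw [ccum4_rotate, ccum4_sum_left s c₄ (fun t _ => h₄ t) (h₁ p) (h₂ q) (h₃ r),
    Finset.mul_sum, Finset.mul_sum, Finset.mul_sum]
  refine Finset.sum_congr rfl fun t _ => ?_
  rw [ccum4_rotate]
  ring

theorem ccum4_mixture_of_diagonal [IsFiniteMeasure μ] {ι κ : Type*} [Fintype ι] [DecidableEq ι]
    (U : Matrix κ ι ℂ) {S : ι → Ω → ℂ} (hS : ∀ p, MemLp (S p) 4 μ) (kurt : ι → ℂ)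
    (hcum : ∀ p q r t, ccum4 μ (S p) (fun ω => conj (S q ω)) (S r) (fun ω => conj (S t ω))
      = if p = q ∧ q = r ∧ r = t then kurt p else 0)
    (i j k l : κ) :
    ccum4 μ (fun ω => ∑ p, U i p * S p ω) (fun ω => conj (∑ p, U j p * S p ω))
        (fun ω => ∑ p, U k p * S p ω) (fun ω => conj (∑ p, U l p * S p ω))
      = ∑ p, U i p * conj (U j p) * U k p * conj (U l p) * kurt p := by
  simp only [map_sum, map_mul]
  have hS' : ∀ p, MemLp (fun ω => conj (S p ω)) 4 μ := fun p => (hS p).star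
  rw [ccum4_sum_sum_sum_sum _ _ _ _ _ hS hS' hS hS']
  simp only [hcum, ite_and, mul_ite, mul_zero, Finset.sum_ite_irrel, Finset.sum_ite_eq,
    Finset.mem_univ, if_true, Finset.sum_const_zero]

end Cumulant

theorem cumulant_matrix_structure_general
    {Ω : Type*} [MeasurableSpace Ω] (μ : Measure Ω) [IsProbabilityMeasure μ]
    (n : ℕ) (U : Matrix (Fin n) (Fin n) ℂ)
    (S : Fin n → Ω → ℂ)
    (hS4 : ∀ i, MemLp (S i) 4 μ)
    (kurt : Fin n → ℂ)
    (hcum : ∀ i j k l : Fin n,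
      ccum4 μ (S i) (fun ω => starRingEnd ℂ (S j ω)) (S k)
        (fun ω => starRingEnd ℂ (S l ω))
        = if i = j ∧ j = k ∧ k = l then kurt i else 0)
    (Z : Fin n → Ω → ℂ) (hZ : ∀ i ω, Z i ω = ∑ p, U i p * S p ω) :
    ∀ (M : Matrix (Fin n) (Fin n) ℂ) (i j : Fin n),
      (∑ k, ∑ l, ccum4 μ (Z i) (fun ω => starRingEnd ℂ (Z j ω)) (Z k)
          (fun ω => starRingEnd ℂ (Z l ω)) * M l k)
        = ∑ p, kurt p * (∑ a, ∑ b, starRingEnd ℂ (U a p) * M a b * U b p)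
            * (U i p * starRingEnd ℂ (U j p)) := by
  intro M i j
  obtain rfl : Z = fun a ω => ∑ p, U a p * S p ω := funext fun a => funext (hZ a)
  simp only [ccum4_mixture_of_diagonal U hS4 kurt hcum, Finset.sum_mul, Finset.mul_sum]
  rw [Finset.sum_comm_cycle]
  refine Finset.sum_congr rfl fun p _ => Finset.sum_comm.trans ?_
  exact Finset.sum_congr rfl fun l _ => Finset.sum_congr rfl fun k _ => by ring

/-- For `Z = U S` with `U` unitary and `S` having cumulant structure
`Cum[S_i,S_j*,S_k,S_l*] = kurt_i δ_{ijkl}`, the cumulant matrix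
`q_{ij} = Σ_{k,l} Cum(Z_i, Z_j*, Z_k, Z_l*) m_{lk}` equals
`Σ_p (kurt_p · u_p' M u_p) u_p u_p'`. -/
theorem cumulant_matrix_structure
    {Ω : Type*} [MeasurableSpace Ω] (μ : Measure Ω) [IsProbabilityMeasure μ]
    (n : ℕ) (U : Matrix (Fin n) (Fin n) ℂ)
    (hU : U ∈ Matrix.unitaryGroup (Fin n) ℂ)
    (S : Fin n → Ω → ℂ)
    (hS4 : ∀ i, MemLp (S i) 4 μ) (hS0 : ∀ i, ∫ ω, S i ω ∂μ = 0)
    (kurt : Fin n → ℂ)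
    (hcum : ∀ i j k l : Fin n,
      ccum4 μ (S i) (fun ω => starRingEnd ℂ (S j ω)) (S k)
        (fun ω => starRingEnd ℂ (S l ω))
        = if i = j ∧ j = k ∧ k = l then kurt i else 0)
    (Z : Fin n → Ω → ℂ) (hZ : ∀ i ω, Z i ω = ∑ p, U i p * S p ω) :
    ∀ (M : Matrix (Fin n) (Fin n) ℂ) (i j : Fin n),
      (∑ k, ∑ l, ccum4 μ (Z i) (fun ω => starRingEnd ℂ (Z j ω)) (Z k)
          (fun ω => starRingEnd ℂ (Z l ω)) * M l k)
        = ∑ p, kurt p * (∑ a, ∑ b, starRingEnd ℂ (U a p) * M a b * U b p)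
            * (U i p * starRingEnd ℂ (U j p)) :=
  cumulant_matrix_structure_general μ n U S hS4 kurt hcum Z hZ
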